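/- Take b(x) = χ_{(2,∞)}(x) ∈ BMO(ℝ) and f₀(x) = χ_{(0,2)}(x) - χ_{(-2,0)}(x) (a multiple of an H¹(ℝ) atom). Then for x > 3, |[b,H]f₀(x)| = 2/x, and consequently ∫_ℝ |[b,H]f₀(x)| dx = ∞; hence the commutator [b,H] is not bounded from H¹(ℝ) to L¹(ℝ). -/

import Mathlib

open MeasureTheory

/-- The one-dimensional Hardy operator `Hf(x) = (1/x) ∫₀ˣ f(t) dt`. -/
noncomputable def hardyOp1 (f : ℝ → ℝ) (x : ℝ) : ℝ :=
  x⁻¹ * ∫ t in (0:ℝ)..x, f t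

/-- The commutator `[b,H]f = b·Hf - H(bf)`. -/
noncomputable def hardyComm1 (b f : ℝ → ℝ) (x : ℝ) : ℝ :=
  b x * hardyOp1 f x - hardyOp1 (fun y => b y * f y) x

/-- `b = χ_{(2,∞)}`. -/
noncomputable def bInd : ℝ → ℝ := (Set.Ioi (2:ℝ)).indicator 1

/-- `f₀ = χ_{(0,2)} - χ_{(-2,0)}`. -/
noncomputable def fAtom : ℝ → ℝ := fun x =>
  (Set.Ioo (0:ℝ) 2).indicator 1 x - (Set.Ioo (-2:ℝ) 0).indicator 1 x

/-! The supports of `b` and `f₀` are disjoint, so `H(b f₀) = 0` and `[b,H]f₀ = b · Hf₀`. For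
`x > 2` only the positive half of `f₀` lies in `(0, x)`, so `Hf₀(x) = 2/x`; this is not
integrable at infinity. -/

open Set

lemma not_integrableOn_Ioi_of_eqOn_const_div {f : ℝ → ℝ} {a c : ℝ} (hc : c ≠ 0)
    (hf : EqOn f (fun x => c / x) (Ioi a)) : ¬ IntegrableOn f (Ioi a) := fun h =>
  not_integrableOn_Ioi_inv <| IntegrableOn.congr_fun (h.const_mul c⁻¹)
    (fun x hx => by rw [hf hx, mul_div_assoc', inv_mul_cancel₀ hc, one_div]) measurableSet_Ioi

lemma hardyComm1_eq_mul_hardyOp1_of_mul_eq_zero {b f : ℝ → ℝ} (hbf : ∀ y, b y * f y = 0) (x : ℝ) :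
    hardyComm1 b f x = b x * hardyOp1 f x := by
  simp [hardyComm1, hardyOp1, hbf]

lemma bInd_mul_fAtom (y : ℝ) : bInd y * fAtom y = 0 := by
  by_cases hy : 2 < y
  · have h₁ : y ∉ Ioo (0 : ℝ) 2 := fun h => h.2.not_gt hy
    have h₂ : y ∉ Ioo (-2 : ℝ) 0 := fun h => (h.2.trans two_pos).not_gt hy
    simp [fAtom, h₁, h₂]
  · simp [bInd, hy]

lemma fAtom_eqOn_Ici_zero : EqOn fAtom ((Ioo (0 : ℝ) 2).indicator 1) (Ici 0) := fun y hy => by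
  have : y ∉ Ioo (-2 : ℝ) 0 := fun h => h.2.not_ge hy
  simp [fAtom, this]

lemma integral_fAtom_of_two_le {x : ℝ} (hx : 2 ≤ x) : ∫ t in (0 : ℝ)..x, fAtom t = 2 := by
  have hx₀ : (0 : ℝ) ≤ x := zero_le_two.trans hx
  have hsub : Ioo (0 : ℝ) 2 ⊆ Ioc 0 x := fun t ht => ⟨ht.1, ht.2.le.trans hx⟩
  have hIcc : uIcc 0 x ⊆ Ici (0 : ℝ) := by simp [uIcc_of_le hx₀, Icc_subset_Ici_self]
  rw [intervalIntegral.integral_congr (fAtom_eqOn_Ici_zero.mono hIcc),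
    intervalIntegral.integral_of_le hx₀, setIntegral_indicator measurableSet_Ioo,
    inter_eq_self_of_subset_right hsub]
  simp

lemma hardyComm1_bInd_fAtom_of_two_lt {x : ℝ} (hx : 2 < x) :
    hardyComm1 bInd fAtom x = 2 / x := by
  have hb : bInd x = 1 := by simp [bInd, hx]
  rw [hardyComm1_eq_mul_hardyOp1_of_mul_eq_zero bInd_mul_fAtom, hb, hardyOp1,
    integral_fAtom_of_two_le hx.le]
  ring

/-- With `b = χ_{(2,∞)} ∈ BMO(ℝ)` and the atom-multiple `f₀ = χ_{(0,2)} - χ_{(-2,0)}`,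
one has `|[b,H]f₀(x)| = 2/x` for `x > 3`, so `∫_ℝ |[b,H]f₀| = ∞`: the commutator
`[b,H]` is not bounded from `H¹(ℝ)` to `L¹(ℝ)`. -/
theorem commutator_not_H1_to_L1 :
    (∀ x : ℝ, 3 < x → |hardyComm1 bInd fAtom x| = 2 / x) ∧
    ¬ Integrable (hardyComm1 bInd fAtom) volume := by
  have hcomm : EqOn (hardyComm1 bInd fAtom) (fun x => 2 / x) (Ioi 3) := fun x hx =>
    hardyComm1_bInd_fAtom_of_two_lt (by linarith [mem_Ioi.1 hx])
  refine ⟨fun x hx => ?_, fun h => ?_⟩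
  · rw [hcomm hx, abs_of_pos (div_pos two_pos (by linarith))]
  · exact not_integrableOn_Ioi_of_eqOn_const_div two_ne_zero hcomm h.integrableOn
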